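/- Let C̃, R̃, Ũ be matrices, E_C, E_R perturbations, and τ > 0. Suppose ‖C̃ [Ũ]†_τ‖₂ ≤ γ_C and ‖[Ũ]†_τ R̃‖₂ ≤ γ_R. Then ‖C̃ [Ũ]†_τ R̃ − (C̃ − E_C)[Ũ]†_τ(R̃ − E_R)‖_F ≤ γ_C ‖E_R‖_F + γ_R ‖E_C‖_F + (1/τ)‖E_C‖_F ‖E_R‖_F. -/

import Mathlib

open Matrix

/-- Frobenius norm of a real matrix. -/
noncomputable def frobNorm {m n : Type*} [Fintype m] [Fintype n]
    (A : Matrix m n ℝ) : ℝ := Real.sqrt (∑ i, ∑ j, (A i j) ^ 2)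

/-- Spectral (operator) norm of a real matrix. -/
noncomputable def specNorm {m n : ℕ} (A : Matrix (Fin m) (Fin n) ℝ) : ℝ :=
  ‖LinearMap.toContinuousLinearMap (Matrix.toEuclideanLin A)‖

/-- `B` is the Moore–Penrose pseudoinverse of `A`. -/
def IsMPInv {m n : ℕ} (A : Matrix (Fin m) (Fin n) ℝ)
    (B : Matrix (Fin n) (Fin m) ℝ) : Prop :=
  A * B * A = A ∧ B * A * B = B ∧ (A * B)ᵀ = A * B ∧ (B * A)ᵀ = B * A

/-- `B` is the `τ`-truncated Moore–Penrose pseudoinverse of `A`: singular values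
of `A` below `τ` are set to zero before pseudoinverting. -/
def IsTruncatedPinv {m n : ℕ} (A : Matrix (Fin m) (Fin n) ℝ) (τ : ℝ)
    (B : Matrix (Fin n) (Fin m) ℝ) : Prop :=
  ∃ (r : ℕ) (W : Matrix (Fin m) (Fin r) ℝ) (V : Matrix (Fin n) (Fin r) ℝ)
    (σ : Fin r → ℝ),
    Wᵀ * W = 1 ∧ Vᵀ * V = 1 ∧ (∀ i, 0 < σ i) ∧
    A = W * Matrix.diagonal σ * Vᵀ ∧
    B = V * Matrix.diagonal (fun i => if τ ≤ σ i then (σ i)⁻¹ else 0) * Wᵀ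

/-- `B` is `A` with its singular values below `τ` set to zero. -/
def IsTruncation {m n : ℕ} (A : Matrix (Fin m) (Fin n) ℝ) (τ : ℝ)
    (B : Matrix (Fin m) (Fin n) ℝ) : Prop :=
  ∃ (r : ℕ) (W : Matrix (Fin m) (Fin r) ℝ) (V : Matrix (Fin n) (Fin r) ℝ)
    (σ : Fin r → ℝ),
    Wᵀ * W = 1 ∧ Vᵀ * V = 1 ∧ (∀ i, 0 < σ i) ∧
    A = W * Matrix.diagonal σ * Vᵀ ∧
    B = W * Matrix.diagonal (fun i => if τ ≤ σ i then σ i else 0) * Vᵀ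


/-! Expanding the product, the difference equals `C̃ U† E_R + E_C (U† R̃) - E_C U† E_R`.
Since `‖X Y‖_F ≤ ‖X‖₂ ‖Y‖_F` and `‖X Y‖_F ≤ ‖X‖_F ‖Y‖₂`, the first two terms are controlled by
`γC` and `γR`, and the last by `‖E_C‖_F ‖U†‖₂ ‖E_R‖_F`. Finally `U† = V diag(d) Wᵀ` with `V`, `W`
having orthonormal columns and `0 ≤ d_i ≤ 1/τ`, so `‖U†‖₂ ≤ 1/τ`. -/

section Frobenius

variable {l m n : Type*} [Fintype l] [Fintype m] [Fintype n]

open scoped Matrix.Norms.Frobenius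

theorem frobNorm_eq_norm (A : Matrix m n ℝ) : frobNorm A = ‖A‖ := by
  rw [frobenius_norm_def, frobNorm, Real.sqrt_eq_rpow]
  simp [Real.norm_eq_abs, sq_abs]

theorem frobNorm_nonneg (A : Matrix m n ℝ) : 0 ≤ frobNorm A := Real.sqrt_nonneg _

theorem frobNorm_add_le (A B : Matrix m n ℝ) : frobNorm (A + B) ≤ frobNorm A + frobNorm B := by
  simpa only [frobNorm_eq_norm] using norm_add_le A B

theorem frobNorm_sub_le (A B : Matrix m n ℝ) : frobNorm (A - B) ≤ frobNorm A + frobNorm B := by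
  simpa only [frobNorm_eq_norm] using norm_sub_le A B

theorem frobNorm_mul_le (A : Matrix l m ℝ) (B : Matrix m n ℝ) :
    frobNorm (A * B) ≤ frobNorm A * frobNorm B := by
  simpa only [frobNorm_eq_norm] using frobenius_norm_mul A B

theorem frobNorm_transpose (A : Matrix m n ℝ) : frobNorm Aᵀ = frobNorm A := by
  simpa only [frobNorm_eq_norm] using frobenius_norm_transpose A

theorem frobNorm_sq_eq_sum_norm_col_sq (A : Matrix m n ℝ) :
    frobNorm A ^ 2 = ∑ j, ‖WithLp.toLp 2 (Aᵀ j)‖ ^ 2 := by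
  rw [frobNorm, Real.sq_sqrt (by positivity), Finset.sum_comm]
  simp [EuclideanSpace.norm_sq_eq]

end Frobenius

section Spectral

open scoped Matrix.Norms.L2Operator

theorem Matrix.l2_opNorm_le_one_of_conjTranspose_mul_self_eq_one {𝕜 m n : Type*} [RCLike 𝕜]
    [Fintype m] [Fintype n] [DecidableEq n] {V : Matrix m n 𝕜} (hV : Vᴴ * V = 1) :
    ‖V‖ ≤ 1 := by
  have hone : ‖(1 : Matrix n n 𝕜)‖ ≤ 1 := by
    rw [← Matrix.diagonal_one, l2_opNorm_diagonal]
    exact (pi_norm_const_le (1 : 𝕜)).trans norm_one.le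
  have hVV := l2_opNorm_conjTranspose_mul_self V
  rw [hV] at hVV
  nlinarith [norm_nonneg V]

variable {l m n : ℕ}

theorem specNorm_transpose (A : Matrix (Fin m) (Fin n) ℝ) : specNorm Aᵀ = specNorm A :=
  Matrix.l2_opNorm_conjTranspose A

-- `‖d‖` is the sup norm of `d`, i.e. the largest `|d i|`.
theorem specNorm_mul_diagonal_mul_transpose_le {r : ℕ} {V : Matrix (Fin n) (Fin r) ℝ}
    {W : Matrix (Fin m) (Fin r) ℝ} (hV : Vᵀ * V = 1) (hW : Wᵀ * W = 1) (d : Fin r → ℝ) :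
    specNorm (V * Matrix.diagonal d * Wᵀ) ≤ ‖d‖ := by
  have hV1 : ‖V‖ ≤ 1 := Matrix.l2_opNorm_le_one_of_conjTranspose_mul_self_eq_one hV
  have hW1 : ‖Wᵀ‖ ≤ 1 := (specNorm_transpose W).trans_le
    (Matrix.l2_opNorm_le_one_of_conjTranspose_mul_self_eq_one hW)
  calc ‖V * Matrix.diagonal d * Wᵀ‖ ≤ ‖V‖ * ‖Matrix.diagonal d‖ * ‖Wᵀ‖ :=
        (Matrix.l2_opNorm_mul _ _).trans (by gcongr; exact Matrix.l2_opNorm_mul _ _)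
    _ ≤ 1 * ‖d‖ * 1 := by rw [Matrix.l2_opNorm_diagonal]; gcongr
    _ = ‖d‖ := by ring

theorem specNorm_le_inv_of_isTruncatedPinv {A : Matrix (Fin m) (Fin n) ℝ} {τ : ℝ}
    {B : Matrix (Fin n) (Fin m) ℝ} (hτ : 0 < τ) (h : IsTruncatedPinv A τ B) :
    specNorm B ≤ τ⁻¹ := by
  obtain ⟨r, W, V, σ, hW, hV, hσ, -, rfl⟩ := h
  refine (specNorm_mul_diagonal_mul_transpose_le hV hW _).trans ?_
  refine (pi_norm_le_iff_of_nonneg (inv_nonneg.2 hτ.le)).2 fun i => ?_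
  split_ifs with hτσ
  · rw [norm_inv, Real.norm_of_nonneg (hσ i).le]
    exact inv_anti₀ hτ hτσ
  · simpa using hτ.le

/-- Column by column, `‖A x‖ ≤ ‖A‖₂ ‖x‖`. -/
theorem frobNorm_mul_le_specNorm_mul (A : Matrix (Fin l) (Fin m) ℝ)
    (B : Matrix (Fin m) (Fin n) ℝ) : frobNorm (A * B) ≤ specNorm A * frobNorm B := by
  refine le_of_sq_le_sq ?_ (mul_nonneg (norm_nonneg _) (frobNorm_nonneg B))
  rw [frobNorm_sq_eq_sum_norm_col_sq, mul_pow, frobNorm_sq_eq_sum_norm_col_sq, Finset.mul_sum]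
  refine Finset.sum_le_sum fun j _ => ?_
  rw [← mul_pow]
  exact pow_le_pow_left₀ (norm_nonneg _) (A.l2_opNorm_mulVec (WithLp.toLp 2 (Bᵀ j))) 2

theorem frobNorm_mul_le_mul_specNorm (A : Matrix (Fin l) (Fin m) ℝ)
    (B : Matrix (Fin m) (Fin n) ℝ) : frobNorm (A * B) ≤ frobNorm A * specNorm B := by
  rw [← frobNorm_transpose, Matrix.transpose_mul, mul_comm, ← specNorm_transpose,
    ← frobNorm_transpose A]
  exact frobNorm_mul_le_specNorm_mul _ _

end Spectral

/-- perturbation bound through a truncated pseudoinverse. -/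
theorem cross_perturbation_bound {m p n : ℕ}
    (Ct EC : Matrix (Fin m) (Fin p) ℝ) (Ut Utpinv : Matrix (Fin p) (Fin p) ℝ)
    (Rt ER : Matrix (Fin p) (Fin n) ℝ) (τ γC γR : ℝ) (hτ : 0 < τ)
    (hUt : IsTruncatedPinv Ut τ Utpinv)
    (hγC : specNorm (Ct * Utpinv) ≤ γC) (hγR : specNorm (Utpinv * Rt) ≤ γR) :
    frobNorm (Ct * Utpinv * Rt - (Ct - EC) * Utpinv * (Rt - ER))
      ≤ γC * frobNorm ER + γR * frobNorm EC
        + (1 / τ) * frobNorm EC * frobNorm ER := by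
  have hEC := frobNorm_nonneg EC
  have hER := frobNorm_nonneg ER
  have hexpand : Ct * Utpinv * Rt - (Ct - EC) * Utpinv * (Rt - ER)
      = Ct * Utpinv * ER + EC * (Utpinv * Rt) - EC * Utpinv * ER := by
    simp only [Matrix.sub_mul, Matrix.mul_sub, Matrix.mul_assoc]
    abel
  have hU : specNorm Utpinv ≤ 1 / τ :=
    (one_div τ).symm ▸ specNorm_le_inv_of_isTruncatedPinv hτ hUt
  have hC : frobNorm (Ct * Utpinv * ER) ≤ γC * frobNorm ER :=
    (frobNorm_mul_le_specNorm_mul _ _).trans (by gcongr)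
  have hR : frobNorm (EC * (Utpinv * Rt)) ≤ γR * frobNorm EC :=
    (frobNorm_mul_le_mul_specNorm _ _).trans (by rw [mul_comm]; gcongr)
  have hCR : frobNorm (EC * Utpinv * ER) ≤ 1 / τ * frobNorm EC * frobNorm ER :=
    calc frobNorm (EC * Utpinv * ER) ≤ frobNorm EC * specNorm Utpinv * frobNorm ER :=
          (frobNorm_mul_le _ _).trans (by gcongr; exact frobNorm_mul_le_mul_specNorm _ _)
      _ ≤ frobNorm EC * (1 / τ) * frobNorm ER := by gcongr
      _ = 1 / τ * frobNorm EC * frobNorm ER := by ring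
  rw [hexpand]
  linarith [frobNorm_sub_le (Ct * Utpinv * ER + EC * (Utpinv * Rt)) (EC * Utpinv * ER),
    frobNorm_add_le (Ct * Utpinv * ER) (EC * (Utpinv * Rt))]
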